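/- arXiv:1504.00695 — 3 statements merged into one kernel-verified Lean document; each statement's English description precedes it below -/
import Mathlib

section
/- Let P = (ℱ,μ) be a probabilistic formula over Ξ^n that is a non-adaptive 2-sided partial (ε/2, δ)-test for a pair (L',L) which is ε-nontrivial. If ℱ' ⊆ ℱ is such that |∪_{(Q,S)∈ℱ'} Q| ≤ εn/2, then μ(ℱ') ≤ 2δ. -/
open scoped Classical BigOperators

noncomputable section

/-- `w` and `v` differ in more than `ε·n` coordinates. -/
def FarWord {n : ℕ} {Ξ : Type*} (ε : ℝ) (w v : Fin n → Ξ) : Prop :=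
  ε * n < ((Finset.univ.filter fun i => w i ≠ v i).card : ℝ)

/-- `w` is `ε`-far from every word of `L`. -/
def FarFrom {n : ℕ} {Ξ : Type*} (ε : ℝ) (w : Fin n → Ξ) (L : Set (Fin n → Ξ)) : Prop :=
  ∀ v ∈ L, FarWord ε w v

/-- `Q` is a witness against `w` with regard to `L`. -/
def IsWitness {n : ℕ} {Ξ : Type*} (L : Set (Fin n → Ξ)) (w : Fin n → Ξ)
    (Q : Finset (Fin n)) : Prop :=
  ∀ u : Fin n → Ξ, (∀ i ∈ Q, u i = w i) → u ∉ L

/-- `μ` is a probability distribution over subsets of `[n]`. -/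
def IsDistr {n : ℕ} (μ : Finset (Fin n) → ℝ) : Prop :=
  (∀ Q, 0 ≤ μ Q) ∧ ∑ Q : Finset (Fin n), μ Q = 1

/-- The support of a distribution over subsets of `[n]`. -/
def distSupp {n : ℕ} (μ : Finset (Fin n) → ℝ) : Finset (Finset (Fin n)) :=
  Finset.univ.filter fun Q => 0 < μ Q

/-- `μ(𝒜) = Σ_{Q ∈ 𝒜} μ(Q)`. -/
def mass {n : ℕ} (μ : Finset (Fin n) → ℝ) (A : Finset (Finset (Fin n))) : ℝ :=
  ∑ Q ∈ A, μ Q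

/-- Probability that a `p`-sampled subset of `[n]` (each index included independently
with probability `p`) satisfies the event `E`. -/
def sampleProb (n : ℕ) (p : ℝ) (E : Finset (Fin n) → Prop) : ℝ :=
  ∑ R ∈ Finset.univ.filter E, p ^ R.card * (1 - p) ^ (n - R.card)

/-- A non-adaptive 1-sided `(ε,δ)`-test for `L`: a distribution over subsets of `[n]`
that against every `ε`-far word yields a witness with probability at least `1-δ`. -/
def IsOneSidedTest {n : ℕ} {Ξ : Type*} (ε δ : ℝ) (μ : Finset (Fin n) → ℝ)
    (L : Set (Fin n → Ξ)) : Prop :=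
  IsDistr μ ∧
    ∀ w : Fin n → Ξ, FarFrom ε w L →
      1 - δ ≤ mass μ (Finset.univ.filter fun Q => IsWitness L w Q)


/-- A probabilistic formula over `Ξ^n`: a satisfaction function `S Q : Ξ^n → [0,1]`
for every query set `Q ⊆ [n]` (depending only on the restriction to `Q`, i.e., on
`w_Q ∈ Ξ^{|Q|}`), together with a probability distribution `μ` over the query sets. -/
structure ProbFormula (n : ℕ) (Ξ : Type*) where
  S : Finset (Fin n) → (Fin n → Ξ) → ℝ
  μ : Finset (Fin n) → ℝ
  μ_nonneg : ∀ Q, 0 ≤ μ Q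
  μ_sum : ∑ Q : Finset (Fin n), μ Q = 1
  S_range : ∀ Q w, 0 ≤ S Q w ∧ S Q w ≤ 1
  S_local : ∀ Q (w w' : Fin n → Ξ), (∀ i ∈ Q, w i = w' i) → S Q w = S Q w'

namespace ProbFormula

variable {n : ℕ} {Ξ : Type*}

/-- The satisfaction of `P` by `w`: the expectation of `S(w_Q)` for `(Q,S)` drawn
according to `μ`. -/
def sat (P : ProbFormula n Ξ) (w : Fin n → Ξ) : ℝ :=
  ∑ Q : Finset (Fin n), P.μ Q * P.S Q w

/-- The support of the distribution of `P`. -/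
def supp (P : ProbFormula n Ξ) : Finset (Finset (Fin n)) :=
  Finset.univ.filter fun Q => 0 < P.μ Q

/-- `P` is a `q`-formula: all query sets in the support have cardinality `q`. -/
def IsQForm (P : ProbFormula n Ξ) (q : ℕ) : Prop :=
  ∀ Q, 0 < P.μ Q → Q.card = q

/-- `P` is zero-one: all satisfaction functions of constraints in the support take
values in `{0,1}`. -/
def ZeroOne (P : ProbFormula n Ξ) : Prop :=
  ∀ Q, 0 < P.μ Q → ∀ w, P.S Q w = 0 ∨ P.S Q w = 1

/-- `P` is `β`-equitable: `μ(C₁) ≤ β·μ(C₂)` for all constraints in the support. -/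
def Equitable (P : ProbFormula n Ξ) (β : ℝ) : Prop :=
  ∀ Q Q', 0 < P.μ Q → 0 < P.μ Q' → P.μ Q ≤ β * P.μ Q'

/-- `P` is 1-equitable: `μ` is uniform over its support. -/
def Uniform (P : ProbFormula n Ξ) : Prop :=
  ∀ Q Q', 0 < P.μ Q → 0 < P.μ Q' → P.μ Q = P.μ Q'

/-- `P` is combinatorial: zero-one and 1-equitable. -/
def Combinatorial (P : ProbFormula n Ξ) : Prop :=
  P.ZeroOne ∧ P.Uniform

/-- `P` is a non-adaptive 2-sided partial `(ε,δ)`-test for `(L',L)`. -/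
def IsPartialTest (P : ProbFormula n Ξ) (ε δ : ℝ) (L' L : Set (Fin n → Ξ)) : Prop :=
  (∀ w ∈ L', 1 - δ ≤ P.sat w) ∧
  ∀ w : Fin n → Ξ, FarFrom ε w L → P.sat w ≤ δ

end ProbFormula

/-- The pair `(L',L)` is `ε`-nontrivial: `L'` is nonempty and some word of `Ξ^n` is
`ε`-far from `L`. -/
def NontrivialPair {n : ℕ} {Ξ : Type*} (ε : ℝ) (L' L : Set (Fin n → Ξ)) : Prop :=
  L'.Nonempty ∧ ∃ w : Fin n → Ξ, FarFrom ε w L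

open Finset

theorem card_filter_ne_le_card_filter_ne_add_card {ι α : Type*} [Fintype ι]
    {w v z : ι → α} {U : Finset ι} (hvw : ∀ i ∉ U, v i = w i) :
    #{i | w i ≠ z i} ≤ #{i | v i ≠ z i} + #U := by
  refine (card_le_card fun i hi => ?_).trans (card_union_le _ U)
  by_cases hiU : i ∈ U
  · exact mem_union_right _ hiU
  · simp_all

theorem FarFrom.of_eqOn_compl {n : ℕ} {Ξ : Type*} {ε ε' : ℝ} {w v : Fin n → Ξ}
    {L : Set (Fin n → Ξ)} {U : Finset (Fin n)} (hw : FarFrom ε w L)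
    (hvw : ∀ i ∉ U, v i = w i) (hU : ε' * n + #U ≤ ε * n) : FarFrom ε' v L := by
  intro z hz
  have hcard : (#{i | w i ≠ z i} : ℝ) ≤ #{i | v i ≠ z i} + #U := by
    exact_mod_cast card_filter_ne_le_card_filter_ne_add_card (z := z) hvw
  have hwz : FarWord ε w z := hw z hz
  unfold FarWord at hwz ⊢
  linarith

namespace ProbFormula

variable {n : ℕ} {Ξ : Type*}

theorem mass_compl (P : ProbFormula n Ξ) (F : Finset (Finset (Fin n))) :
    mass P.μ Fᶜ = 1 - mass P.μ F := by
  rw [← P.μ_sum, ← sum_add_sum_compl F, mass, mass]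
  ring

theorem sat_sub_sat_le_mass_compl (P : ProbFormula n Ξ) {F : Finset (Finset (Fin n))}
    {u v : Fin n → Ξ} (h : ∀ Q ∈ F, P.S Q u = P.S Q v) :
    P.sat u - P.sat v ≤ mass P.μ Fᶜ :=
  calc P.sat u - P.sat v = ∑ Q, P.μ Q * (P.S Q u - P.S Q v) := by
        simp only [sat, mul_sub, sum_sub_distrib]
    _ = ∑ Q ∈ Fᶜ, P.μ Q * (P.S Q u - P.S Q v) := by
        rw [← sum_add_sum_compl F, sum_eq_zero fun Q hQ => by rw [h Q hQ, sub_self, mul_zero],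
          zero_add]
    _ ≤ mass P.μ Fᶜ := sum_le_sum fun Q _ =>
        mul_le_of_le_one_right (P.μ_nonneg Q) (by linarith [(P.S_range Q u).2, (P.S_range Q v).1])

end ProbFormula

/-- Splice a word `u ∈ L'` into an `ε`-far word `w` on the union `U` of the queries of `ℱ'`:
the result is still `ε/2`-far, yet `ℱ'` cannot tell it from `u`, so the constraints of `ℱ'`
carry at most the gap `2δ` between acceptance of `u` and rejection of the hybrid. -/
theorem stmt13_general {n : ℕ} {Ξ : Type*} (ε δ : ℝ)
    (L' L : Set (Fin n → Ξ)) (hnt : NontrivialPair ε L' L)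
    (P : ProbFormula n Ξ) (htest : P.IsPartialTest (ε/2) δ L' L)
    (F' : Finset (Finset (Fin n)))
    (hcover : ((F'.biUnion id).card : ℝ) ≤ ε * n / 2) :
    mass P.μ F' ≤ 2 * δ := by
  obtain ⟨⟨u, hu⟩, w, hw⟩ := hnt
  set U := F'.biUnion id
  have hfar : FarFrom (ε / 2) (U.piecewise u w) L :=
    hw.of_eqOn_compl (fun i hi => piecewise_eq_of_notMem _ _ _ hi) (by linarith)
  have hagree : ∀ Q ∈ F', P.S Q u = P.S Q (U.piecewise u w) := fun Q hQ =>
    P.S_local Q _ _ fun i hi => (piecewise_eq_of_mem _ _ _ (mem_biUnion.2 ⟨Q, hQ, hi⟩)).symm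
  have hgap := P.sat_sub_sat_le_mass_compl hagree
  rw [P.mass_compl] at hgap
  linarith [htest.1 u hu, htest.2 _ hfar]

/-- If `P = (ℱ,μ)` is a non-adaptive 2-sided partial `(ε/2,δ)`-test
for an `ε`-nontrivial pair `(L',L)`, and `ℱ' ⊆ ℱ` is a family of query sets whose
union occupies at most `εn/2` indexes, then `μ(ℱ') ≤ 2δ`. -/
theorem stmt13 {n : ℕ} {Ξ : Type*} [Fintype Ξ] (ε δ : ℝ)
    (L' L : Set (Fin n → Ξ)) (hLL : L' ⊆ L) (hnt : NontrivialPair ε L' L)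
    (P : ProbFormula n Ξ) (htest : P.IsPartialTest (ε/2) δ L' L)
    (F' : Finset (Finset (Fin n)))
    (hcover : ((F'.biUnion id).card : ℝ) ≤ ε * n / 2) :
    mass P.μ F' ≤ 2 * δ :=
  stmt13_general ε δ L' L hnt P htest F' hcover
end
end

section
/- Let 0 ≤ δ < 1/8, 0 < ε ≤ 1, α > 0, and let (L',L) over Ξ^n be ε-nontrivial and admit a non-adaptive 2-sided partial (ε/2, δ, q, αn)-test. Then (L',L) admits a β-equitable non-adaptive 2-sided partial (ε/2, 2δ, q, αn)-test with β = 8qα/ε; moreover, if the original test is zero-one then the new test is zero-one as well. -/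
open scoped Classical BigOperators

noncomputable section

set_option maxHeartbeats 2000000 in
/-- For `δ < 1/8`, an `ε`-nontrivial pair `(L',L)` admitting a
non-adaptive 2-sided partial `(ε/2,δ,q,αn)`-test admits a `β`-equitable partial
`(ε/2,2δ,q,αn)`-test with `β = 8qα/ε`, preserving the zero-one property. -/
theorem stmt14 {n q : ℕ} {Ξ : Type*} [Fintype Ξ] (ε δ α : ℝ)
    (hδ0 : 0 ≤ δ) (hδ : δ < 1/8) (hε : 0 < ε) (hε1 : ε ≤ 1) (hα : 0 < α)
    (L' L : Set (Fin n → Ξ)) (hLL : L' ⊆ L) (hnt : NontrivialPair ε L' L)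
    (P : ProbFormula n Ξ) (htest : P.IsPartialTest (ε/2) δ L' L)
    (hqf : P.IsQForm q) (hsupp : ((P.supp.card : ℝ)) ≤ α * n) :
    ∃ P' : ProbFormula n Ξ,
      P'.Equitable (8 * q * α / ε) ∧
      P'.IsPartialTest (ε/2) (2*δ) L' L ∧
      P'.IsQForm q ∧
      ((P'.supp.card : ℝ) ≤ α * n) ∧
      (P.ZeroOne → P'.ZeroOne) := by
  classical
  obtain ⟨⟨w₀, hw₀⟩, u, hu⟩ := hnt
  -- n is positive
  have hn : 0 < (n : ℝ) := by
    have h1 := hu w₀ (hLL hw₀)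
    unfold FarWord at h1
    have hc : ((Finset.univ.filter fun i => u i ≠ w₀ i).card : ℝ) ≤ (n : ℝ) := by
      have := (Finset.card_filter_le Finset.univ (fun i => u i ≠ w₀ i)).trans
        (by simp : (Finset.univ : Finset (Fin n)).card ≤ n)
      exact_mod_cast this
    nlinarith [mul_nonneg hε.le (Nat.cast_nonneg n)]
  have hεn : 0 < ε * n := mul_pos hε hn
  set hvy : ℝ := 2 * q / (ε * n) with hhvy_def
  set θ : ℝ := 1 / (4 * α * n) with hθ_def
  have hθpos : 0 < θ := by
    apply div_pos one_pos
    positivity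
  have hhvy0 : 0 ≤ hvy := by positivity
  have hθeq : θ * (4 * α * n) = 1 := by
    rw [hθ_def]; field_simp
  have hhvyeq : hvy * (ε * n) = 2 * q := by
    rw [hhvy_def]; field_simp
  -- Key claim: a family of constraints of small total query size has small mass
  have keyA : ∀ 𝒜 : Finset (Finset (Fin n)), (∀ Q ∈ 𝒜, 0 < P.μ Q) →
      ((q : ℝ) * 𝒜.card ≤ ε * n / 2) → ∑ Q ∈ 𝒜, P.μ Q ≤ 2 * δ := by
    intro 𝒜 h𝒜supp h𝒜card
    set B := 𝒜.biUnion id with hB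
    have hBcard : (B.card : ℝ) ≤ ε * n / 2 := by
      have h1 : B.card ≤ ∑ Q ∈ 𝒜, (id Q).card := Finset.card_biUnion_le
      have h2 : ∑ Q ∈ 𝒜, (id Q).card = q * 𝒜.card := by
        calc ∑ Q ∈ 𝒜, (id Q).card = ∑ _Q ∈ 𝒜, q :=
              Finset.sum_congr rfl (fun Q hQ => hqf Q (h𝒜supp Q hQ))
          _ = q * 𝒜.card := by simp [mul_comm]
      have h3 : (B.card : ℝ) ≤ ((q * 𝒜.card : ℕ) : ℝ) := by
        exact_mod_cast h1.trans_eq h2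
      push_cast at h3
      linarith
    set u' : Fin n → Ξ := fun i => if i ∈ B then w₀ i else u i with hu'
    have hfar : FarFrom (ε/2) u' L := by
      intro v hv
      have h1 := hu v hv
      unfold FarWord at h1 ⊢
      have hsub : (Finset.univ.filter fun i => u i ≠ v i) ⊆
          (Finset.univ.filter fun i => u' i ≠ v i) ∪ B := by
        intro i hi
        simp only [Finset.mem_filter, Finset.mem_univ, true_and] at hi
        by_cases hiB : i ∈ B
        · exact Finset.mem_union_right _ hiB
        · refine Finset.mem_union_left _ ?_
          simp only [Finset.mem_filter, Finset.mem_univ, true_and, hu']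
          simpa [hiB] using hi
      have hcard := (Finset.card_le_card hsub).trans
        (Finset.card_union_le (Finset.univ.filter fun i => u' i ≠ v i) B)
      have hcard' : ((Finset.univ.filter fun i => u i ≠ v i).card : ℝ)
          ≤ ((Finset.univ.filter fun i => u' i ≠ v i).card : ℝ) + B.card := by
        exact_mod_cast hcard
      linarith
    have hsatu' := htest.2 u' hfar
    have hSloc : ∀ Q ∈ 𝒜, P.S Q u' = P.S Q w₀ := by
      intro Q hQ
      apply P.S_local
      intro i hi
      have hiB : i ∈ B := Finset.mem_biUnion.mpr ⟨Q, hQ, hi⟩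
      simp [hu', hiB]
    have h3 : ∑ Q ∈ 𝒜, P.μ Q * P.S Q w₀ ≤ δ := by
      calc ∑ Q ∈ 𝒜, P.μ Q * P.S Q w₀ = ∑ Q ∈ 𝒜, P.μ Q * P.S Q u' :=
            Finset.sum_congr rfl fun Q hQ => by rw [hSloc Q hQ]
        _ ≤ ∑ Q : Finset (Fin n), P.μ Q * P.S Q u' := by
            apply Finset.sum_le_sum_of_subset_of_nonneg (Finset.subset_univ _)
            intro Q _ _
            exact mul_nonneg (P.μ_nonneg Q) (P.S_range Q u').1
        _ ≤ δ := hsatu'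
    have h4 := htest.1 w₀ hw₀
    have hsd := Finset.sum_sdiff (f := fun Q => P.μ Q * P.S Q w₀) (Finset.subset_univ 𝒜)
    have hsd2 := Finset.sum_sdiff (f := P.μ) (Finset.subset_univ 𝒜)
    rw [P.μ_sum] at hsd2
    have h5 : ∑ Q ∈ Finset.univ \ 𝒜, P.μ Q * P.S Q w₀ ≤ ∑ Q ∈ Finset.univ \ 𝒜, P.μ Q := by
      apply Finset.sum_le_sum
      intro Q _
      exact mul_le_of_le_one_right (P.μ_nonneg Q) (P.S_range Q w₀).2
    have hsat : P.sat w₀ = ∑ Q ∈ Finset.univ \ 𝒜, P.μ Q * P.S Q w₀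
        + ∑ Q ∈ 𝒜, P.μ Q * P.S Q w₀ := by
      rw [ProbFormula.sat, ← hsd]
    linarith
  -- the heavy constraints have small total mass
  set H : Finset (Finset (Fin n)) := Finset.univ.filter (fun Q => hvy < P.μ Q) with hH
  have hheavy : ∑ Q ∈ H, P.μ Q ≤ 2 * δ := by
    apply keyA
    · intro Q hQ
      have := (Finset.mem_filter.mp hQ).2
      linarith
    · have h1 : H.card • hvy ≤ ∑ Q ∈ H, P.μ Q :=
        Finset.card_nsmul_le_sum H P.μ hvy (fun Q hQ => ((Finset.mem_filter.mp hQ).2).le)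
      rw [nsmul_eq_mul] at h1
      have h2 : ∑ Q ∈ H, P.μ Q ≤ 1 := by
        rw [← P.μ_sum]
        exact Finset.sum_le_sum_of_subset_of_nonneg (Finset.subset_univ _)
          (fun Q _ _ => P.μ_nonneg Q)
      have h3 : (H.card : ℝ) * hvy ≤ 1 := h1.trans h2
      nlinarith [mul_le_mul_of_nonneg_right h3 hεn.le, (Nat.cast_nonneg H.card : (0:ℝ) ≤ (H.card : ℝ))]
  -- the light constraints have small total mass
  set Lt : Finset (Finset (Fin n)) := Finset.univ.filter (fun Q => P.μ Q < θ) with hLt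
  have hlight : ∑ Q ∈ Lt, P.μ Q ≤ 1/4 := by
    have he : ∑ Q ∈ Lt, P.μ Q = ∑ Q ∈ Lt ∩ P.supp, P.μ Q := by
      symm
      apply Finset.sum_subset Finset.inter_subset_left
      intro Q hQ hQ'
      by_contra hne
      have hpos : 0 < P.μ Q := lt_of_le_of_ne (P.μ_nonneg Q) (Ne.symm hne)
      exact hQ' (Finset.mem_inter.mpr ⟨hQ, by simp [ProbFormula.supp, hpos]⟩)
    have h1 : ∑ Q ∈ Lt ∩ P.supp, P.μ Q ≤ (Lt ∩ P.supp).card • θ := by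
      apply Finset.sum_le_card_nsmul
      intro Q hQ
      exact ((Finset.mem_filter.mp (Finset.mem_inter.mp hQ).1).2).le
    rw [nsmul_eq_mul] at h1
    have h2 : ((Lt ∩ P.supp).card : ℝ) ≤ α * n := by
      have hc : (Lt ∩ P.supp).card ≤ P.supp.card :=
        Finset.card_le_card Finset.inter_subset_right
      calc ((Lt ∩ P.supp).card : ℝ) ≤ (P.supp.card : ℝ) := by exact_mod_cast hc
        _ ≤ α * n := hsupp
    have h3 : ((Lt ∩ P.supp).card : ℝ) * θ ≤ (α * n) * θ :=
      mul_le_mul_of_nonneg_right h2 hθpos.le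
    nlinarith
  -- the kept constraints and the normalization constant
  set K : Finset (Finset (Fin n)) :=
    Finset.univ.filter (fun Q => θ ≤ P.μ Q ∧ P.μ Q ≤ hvy) with hK
  set Z : ℝ := ∑ Q ∈ K, P.μ Q with hZdef
  have hsdK := Finset.sum_sdiff (f := P.μ) (Finset.subset_univ K)
  rw [P.μ_sum] at hsdK
  have hcompl : ∑ Q ∈ Finset.univ \ K, P.μ Q ≤ 1/4 + 2 * δ := by
    have hsub : Finset.univ \ K ⊆ Lt ∪ H := by
      intro Q hQ
      have hQ' := Finset.mem_sdiff.mp hQ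
      have hnK : ¬ (θ ≤ P.μ Q ∧ P.μ Q ≤ hvy) := by
        intro hc
        exact hQ'.2 (Finset.mem_filter.mpr ⟨Finset.mem_univ _, hc⟩)
      push_neg at hnK
      rcases lt_or_ge (P.μ Q) θ with h | h
      · exact Finset.mem_union_left _ (Finset.mem_filter.mpr ⟨Finset.mem_univ _, h⟩)
      · exact Finset.mem_union_right _ (Finset.mem_filter.mpr ⟨Finset.mem_univ _, hnK h⟩)
    have h1 : ∑ Q ∈ Finset.univ \ K, P.μ Q ≤ ∑ Q ∈ Lt ∪ H, P.μ Q :=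
      Finset.sum_le_sum_of_subset_of_nonneg hsub (fun Q _ _ => P.μ_nonneg Q)
    have h2 := Finset.sum_union_inter (s₁ := Lt) (s₂ := H) (f := P.μ)
    have h3 : 0 ≤ ∑ Q ∈ Lt ∩ H, P.μ Q :=
      Finset.sum_nonneg (fun Q _ => P.μ_nonneg Q)
    linarith
  have hZ : 1/2 ≤ Z := by linarith
  have hZpos : 0 < Z := by linarith
  have hKpos : ∀ Q ∈ K, 0 < P.μ Q := by
    intro Q hQ
    have := (Finset.mem_filter.mp hQ).2.1
    linarith
  -- the new formula
  set μ' : Finset (Fin n) → ℝ := fun Q => if Q ∈ K then P.μ Q / Z else 0 with hμ'def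
  have hμ'nonneg : ∀ Q, 0 ≤ μ' Q := by
    intro Q
    rw [hμ'def]
    by_cases hQ : Q ∈ K
    · simp only [hQ, if_true]
      exact div_nonneg (P.μ_nonneg Q) hZpos.le
    · simp [hQ]
  have hμ'sum : ∑ Q : Finset (Fin n), μ' Q = 1 := by
    rw [hμ'def]
    rw [Finset.sum_ite_mem, Finset.univ_inter, ← Finset.sum_div, ← hZdef,
      div_self hZpos.ne']
  set P' : ProbFormula n Ξ :=
    ⟨P.S, μ', hμ'nonneg, hμ'sum, P.S_range, P.S_local⟩ with hP'def
  have hP'μ : ∀ Q, P'.μ Q = μ' Q := fun Q => rfl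
  have hmem : ∀ Q : Finset (Fin n), 0 < P'.μ Q ↔ Q ∈ K := by
    intro Q
    rw [hP'μ, hμ'def]
    constructor
    · intro h
      by_contra hQ
      simp [hQ] at h
    · intro hQ
      simp only [hQ, if_true]
      exact div_pos (hKpos Q hQ) hZpos
  have hP'sat : ∀ w : Fin n → Ξ, P'.sat w = (∑ Q ∈ K, P.μ Q * P.S Q w) / Z := by
    intro w
    rw [ProbFormula.sat]
    show ∑ Q : Finset (Fin n), μ' Q * P.S Q w = _
    rw [hμ'def]
    simp only [ite_mul, zero_mul]
    rw [Finset.sum_ite_mem, Finset.univ_inter]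
    calc ∑ Q ∈ K, P.μ Q / Z * P.S Q w
        = ∑ Q ∈ K, P.μ Q * P.S Q w / Z := Finset.sum_congr rfl (fun Q _ => by ring)
      _ = (∑ Q ∈ K, P.μ Q * P.S Q w) / Z := (Finset.sum_div _ _ _).symm
  have hKsub : K ⊆ P.supp := by
    intro Q hQ
    simp only [ProbFormula.supp, Finset.mem_filter, Finset.mem_univ, true_and]
    exact hKpos Q hQ
  refine ⟨P', ?_, ⟨?_, ?_⟩, ?_, ?_, ?_⟩
  · -- Equitable
    intro Q Q' hQ hQ'
    have hQK := (hmem Q).mp hQ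
    have hQ'K := (hmem Q').mp hQ'
    have h1 : P.μ Q ≤ hvy := (Finset.mem_filter.mp hQK).2.2
    have h2 : θ ≤ P.μ Q' := (Finset.mem_filter.mp hQ'K).2.1
    have hβθ : (8 * q * α / ε) * θ = hvy := by
      rw [hθ_def, hhvy_def]
      field_simp
      ring
    have hβ0 : 0 ≤ 8 * (q : ℝ) * α / ε := by positivity
    rw [hP'μ, hP'μ, hμ'def]
    simp only [hQK, hQ'K, if_true]
    have hfin : P.μ Q ≤ (8 * q * α / ε) * P.μ Q' :=
      calc P.μ Q ≤ hvy := h1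
        _ = (8 * q * α / ε) * θ := hβθ.symm
        _ ≤ (8 * q * α / ε) * P.μ Q' := mul_le_mul_of_nonneg_left h2 hβ0
    calc P.μ Q / Z ≤ ((8 * q * α / ε) * P.μ Q') / Z :=
          (div_le_div_iff_of_pos_right hZpos).mpr hfin
      _ = (8 * q * α / ε) * (P.μ Q' / Z) := by ring
  · -- completeness
    intro w hw
    rw [hP'sat]
    have h4 := htest.1 w hw
    have h5 : ∑ Q ∈ Finset.univ \ K, P.μ Q * P.S Q w ≤ ∑ Q ∈ Finset.univ \ K, P.μ Q := by
      apply Finset.sum_le_sum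
      intro Q _
      exact mul_le_of_le_one_right (P.μ_nonneg Q) (P.S_range Q w).2
    have hsd := Finset.sum_sdiff (f := fun Q => P.μ Q * P.S Q w) (Finset.subset_univ K)
    have hsat : P.sat w = ∑ Q ∈ Finset.univ \ K, P.μ Q * P.S Q w
        + ∑ Q ∈ K, P.μ Q * P.S Q w := by
      rw [ProbFormula.sat, ← hsd]
    have h6 : Z - δ ≤ ∑ Q ∈ K, P.μ Q * P.S Q w := by linarith
    rw [le_div_iff₀ hZpos]
    nlinarith
  · -- soundness
    intro w hw
    rw [hP'sat]
    have h4 := htest.2 w hw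
    have h5 : ∑ Q ∈ K, P.μ Q * P.S Q w ≤ P.sat w := by
      rw [ProbFormula.sat]
      apply Finset.sum_le_sum_of_subset_of_nonneg (Finset.subset_univ _)
      intro Q _ _
      exact mul_nonneg (P.μ_nonneg Q) (P.S_range Q w).1
    rw [div_le_iff₀ hZpos]
    nlinarith
  · -- q-formula
    intro Q hQ
    exact hqf Q (hKpos Q ((hmem Q).mp hQ))
  · -- support size
    have hsub : P'.supp ⊆ P.supp := by
      intro Q hQ
      have hQK := (hmem Q).mp ((Finset.mem_filter.mp hQ).2)
      exact hKsub hQK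
    calc ((P'.supp.card : ℝ)) ≤ (P.supp.card : ℝ) := by
          exact_mod_cast Finset.card_le_card hsub
      _ ≤ α * n := hsupp
  · -- zero-one preserved
    intro hz Q hQ w
    exact hz Q (hKpos Q ((hmem Q).mp hQ)) w
end
end

section
/- Let P = (ℱ,μ) be a β-equitable probabilistic formula over Ξ^n (β ≥ 1). Then there exists a nonempty subfamily ℱ' ⊆ supp(μ) such that the 1-equitable formula P' = (ℱ', uniform distribution on ℱ') satisfies: for every δ ∈ [0,1] and every w ∈ Ξ^n, if the satisfaction of P by w is at most δ then the satisfaction of P' by w is at most 2δ·log₂(2β), and if the satisfaction of P by w is at least 1−δ then the satisfaction of P' by w is at least 1−2δ·log₂(2β). In particular, ℱ' ⊆ ℱ, so P' preserves any bound on the support size and on the query-set sizes of P, and is zero-one whenever P is. -/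
open scoped Classical BigOperators

noncomputable section

/-!
Group the constraints of the support into dyadic classes according to `⌊log₂ (m / μ Q)⌋`,
where `m` is the largest weight. Equitability leaves at most `log₂ (2β)` classes, so one class
`ℱ'` carries a `1 / log₂ (2β)` fraction of the mass, and inside a class all weights agree up to
a factor `2`. Hence every `Q ∈ ℱ'` has weight at least `1 / (2 log₂ (2β) |ℱ'|)`, and the uniform
average over `ℱ'` of any `[0,1]`-valued quantity is at most `2 log₂ (2β)` times its
`μ`-expectation; applied to `S` and to `1 - S` this gives both bounds.
-/

open Finset Real

-- For `0 < x ≤ m`, `dyadicLevel m x = l` exactly when `m / 2 ^ (l + 1) < x ≤ m / 2 ^ l`.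
def dyadicLevel (m x : ℝ) : ℕ := ⌊logb 2 (m / x)⌋₊

lemma dyadicLevel_le_floor_logb {m x β : ℝ} (hm : 0 < m) (hx : 0 < x) (h : m ≤ β * x) :
    dyadicLevel m x ≤ ⌊logb 2 β⌋₊ := by
  refine Nat.floor_le_floor (logb_le_logb_of_le one_lt_two (by positivity) ?_)
  rwa [div_le_iff₀ hx]

lemma lt_two_mul_of_dyadicLevel_eq {m x y : ℝ} (hx : 0 < x) (hxm : x ≤ m) (hy : 0 < y)
    (h : dyadicLevel m x = dyadicLevel m y) : x < 2 * y := by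
  have hm : 0 < m := hx.trans_le hxm
  have hlog : logb 2 (m / y) < logb 2 (2 * (m / x)) := by
    rw [logb_mul two_ne_zero (div_pos hm hx).ne', logb_self_eq_one one_lt_two, add_comm]
    calc logb 2 (m / y) < dyadicLevel m y + 1 := Nat.lt_floor_add_one _
      _ = dyadicLevel m x + 1 := by rw [h]
      _ ≤ logb 2 (m / x) + 1 := by
        gcongr
        exact Nat.floor_le (logb_nonneg one_lt_two ((one_le_div hx).2 hxm))
  rw [logb_lt_logb_iff one_lt_two (by positivity) (by positivity)] at hlog
  rw [div_lt_iff₀ hy, mul_comm, ← mul_assoc, ← mul_div_assoc, lt_div_iff₀ hx] at hlog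
  exact lt_of_mul_lt_mul_left (by linarith) hm.le

lemma natFloor_logb_add_one_le_logb_two_mul {β : ℝ} (hβ : 1 ≤ β) :
    (⌊logb 2 β⌋₊ + 1 : ℝ) ≤ logb 2 (2 * β) := by
  rw [logb_mul two_ne_zero (by positivity), logb_self_eq_one one_lt_two, add_comm]
  gcongr
  exact Nat.floor_le (logb_nonneg one_lt_two hβ)

lemma exists_subset_uniformly_heavy {ι : Type*} {s : Finset ι} (hs : s.Nonempty) {μ : ι → ℝ}
    {β : ℝ} (hβ : 1 ≤ β) (hpos : ∀ i ∈ s, 0 < μ i)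
    (heq : ∀ i ∈ s, ∀ j ∈ s, μ i ≤ β * μ j) :
    ∃ t ⊆ s, t.Nonempty ∧ ∀ i ∈ t, ∑ j ∈ s, μ j ≤ 2 * logb 2 (2 * β) * #t * μ i := by
  obtain ⟨i₀, hi₀, hmax⟩ := s.exists_max_image μ hs
  set m := μ i₀
  set N := ⌊logb 2 β⌋₊ + 1
  have hmaps : ∀ i ∈ s, dyadicLevel m (μ i) ∈ range N := fun i hi =>
    mem_range.2 <| Nat.lt_succ_of_le <|
      dyadicLevel_le_floor_logb (hpos i₀ hi₀) (hpos i hi) (heq i₀ hi₀ i hi)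
  have hN : (0 : ℝ) < N := by positivity
  obtain ⟨l, -, hl⟩ := exists_le_sum_fiber_of_maps_to_of_nsmul_le_sum hmaps nonempty_range_add_one
    (b := (∑ j ∈ s, μ j) / N) (by rw [card_range, nsmul_eq_mul, mul_div_cancel₀ _ hN.ne'])
  set t := {i ∈ s | dyadicLevel m (μ i) = l}
  have hmass : ∑ j ∈ s, μ j ≤ N * ∑ j ∈ t, μ j := by rwa [div_le_iff₀' hN] at hl
  have hpos_mass : 0 < ∑ j ∈ s, μ j := sum_pos hpos hs
  refine ⟨t, filter_subset _ _, ?_, fun i hi => ?_⟩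
  · refine nonempty_iff_ne_empty.2 fun ht => ?_
    rw [ht, sum_empty, mul_zero] at hmass
    linarith
  obtain ⟨his, hil⟩ := mem_filter.1 hi
  have hclass : ∑ j ∈ t, μ j ≤ #t * (2 * μ i) := by
    rw [← nsmul_eq_mul, ← sum_const]
    refine sum_le_sum fun j hj => ?_
    obtain ⟨hjs, hjl⟩ := mem_filter.1 hj
    exact (lt_two_mul_of_dyadicLevel_eq (hpos j hjs) (hmax j hjs) (hpos i his)
      (hjl.trans hil.symm)).le
  calc ∑ j ∈ s, μ j ≤ N * (#t * (2 * μ i)) := hmass.trans (by gcongr)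
    _ ≤ logb 2 (2 * β) * (#t * (2 * μ i)) := by
      have := hpos i his
      gcongr
      exact_mod_cast natFloor_logb_add_one_le_logb_two_mul hβ
    _ = 2 * logb 2 (2 * β) * #t * μ i := by ring

lemma sum_div_card_le_mul_sum_mul {ι : Type*} [Fintype ι] {t : Finset ι} {μ g : ι → ℝ}
    {c : ℝ} (hc : 0 ≤ c) (hμ : ∀ i, 0 ≤ μ i) (hg : ∀ i, 0 ≤ g i)
    (ht : ∀ i ∈ t, 1 ≤ c * #t * μ i) :
    (∑ i ∈ t, g i) / #t ≤ c * ∑ i, μ i * g i := by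
  have hrhs : 0 ≤ c * ∑ i, μ i * g i :=
    mul_nonneg hc (sum_nonneg fun i _ => mul_nonneg (hμ i) (hg i))
  rcases t.eq_empty_or_nonempty with rfl | htne
  · simpa using hrhs
  rw [div_le_iff₀ (by exact_mod_cast htne.card_pos)]
  calc ∑ i ∈ t, g i ≤ ∑ i ∈ t, c * #t * (μ i * g i) := sum_le_sum fun i hi => by
        nlinarith [ht i hi, hg i]
    _ = c * #t * ∑ i ∈ t, μ i * g i := by rw [mul_sum]
    _ ≤ c * #t * ∑ i, μ i * g i := by
        gcongr
        · exact fun i _ _ => mul_nonneg (hμ i) (hg i)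
        · exact subset_univ t
    _ = (c * ∑ i, μ i * g i) * #t := by ring

namespace ProbFormula

variable {n : ℕ} {Ξ : Type*}

lemma sum_supp_μ (P : ProbFormula n Ξ) : ∑ Q ∈ P.supp, P.μ Q = 1 := by
  rw [← P.μ_sum, supp]
  exact sum_filter_of_ne fun Q _ hQ => (P.μ_nonneg Q).lt_of_ne' hQ

lemma supp_nonempty (P : ProbFormula n Ξ) : P.supp.Nonempty :=
  nonempty_of_sum_ne_zero (P.sum_supp_μ.trans_ne one_ne_zero)

lemma sum_μ_mul_one_sub_S (P : ProbFormula n Ξ) (w : Fin n → Ξ) :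
    ∑ Q, P.μ Q * (1 - P.S Q w) = 1 - P.sat w := by
  simp only [mul_one_sub, sum_sub_distrib, P.μ_sum, sat]

end ProbFormula

theorem stmt15_general {n : ℕ} {Ξ : Type*} (β : ℝ) (hβ : 1 ≤ β)
    (P : ProbFormula n Ξ) (heq : P.Equitable β) :
    ∃ F' : Finset (Finset (Fin n)),
      F'.Nonempty ∧ (∀ Q ∈ F', 0 < P.μ Q) ∧
      ∀ (δ : ℝ), 0 ≤ δ → δ ≤ 1 → ∀ w : Fin n → Ξ,
        (P.sat w ≤ δ →
          (∑ Q ∈ F', P.S Q w) / (F'.card : ℝ) ≤ 2 * δ * Real.logb 2 (2*β)) ∧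
        (1 - δ ≤ P.sat w →
          1 - 2 * δ * Real.logb 2 (2*β) ≤ (∑ Q ∈ F', P.S Q w) / (F'.card : ℝ)) := by
  have hsupp : ∀ Q ∈ P.supp, 0 < P.μ Q := fun Q hQ => (mem_filter.1 hQ).2
  obtain ⟨F', hF'supp, hF', hheavy⟩ := exists_subset_uniformly_heavy P.supp_nonempty hβ hsupp
    fun Q hQ Q' hQ' => heq Q Q' (hsupp Q hQ) (hsupp Q' hQ')
  rw [P.sum_supp_μ] at hheavy
  have hL : 0 ≤ 2 * logb 2 (2 * β) := by
    have := logb_nonneg one_lt_two (by linarith : 1 ≤ 2 * β)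
    positivity
  have hcard : (0 : ℝ) < #F' := by exact_mod_cast hF'.card_pos
  refine ⟨F', hF', fun Q hQ => hsupp Q (hF'supp hQ), fun δ _ _ w => ⟨fun hsat => ?_, fun hsat => ?_⟩⟩
  · have := sum_div_card_le_mul_sum_mul hL P.μ_nonneg (fun Q => (P.S_range Q w).1) hheavy
    rw [← ProbFormula.sat] at this
    linarith [mul_le_mul_of_nonneg_left hsat hL]
  · have := sum_div_card_le_mul_sum_mul hL P.μ_nonneg (fun Q => sub_nonneg.2 (P.S_range Q w).2)
      hheavy
    rw [P.sum_μ_mul_one_sub_S, sum_sub_distrib, sum_const, nsmul_one, sub_div,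
      div_self hcard.ne'] at this
    linarith [mul_le_mul_of_nonneg_left (show 1 - P.sat w ≤ δ by linarith) hL]

/-- A `β`-equitable formula `P` has a nonempty subfamily
`ℱ' ⊆ supp(μ)` such that the 1-equitable formula with family `ℱ'` and the uniform
distribution (whose satisfaction by `w` is `(Σ_{Q∈ℱ'} S_Q(w_Q))/|ℱ'|`) is
`2δ log₂(2β)`-sure, in the same direction, about every word `P` is `δ`-sure about.
Since `ℱ' ⊆ supp(μ)`, it preserves support size, query sizes, and the zero-one
property. -/
theorem stmt15 {n : ℕ} {Ξ : Type*} [Fintype Ξ] (β : ℝ) (hβ : 1 ≤ β)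
    (P : ProbFormula n Ξ) (heq : P.Equitable β) :
    ∃ F' : Finset (Finset (Fin n)),
      F'.Nonempty ∧ (∀ Q ∈ F', 0 < P.μ Q) ∧
      ∀ (δ : ℝ), 0 ≤ δ → δ ≤ 1 → ∀ w : Fin n → Ξ,
        (P.sat w ≤ δ →
          (∑ Q ∈ F', P.S Q w) / (F'.card : ℝ) ≤ 2 * δ * Real.logb 2 (2*β)) ∧
        (1 - δ ≤ P.sat w →
          1 - 2 * δ * Real.logb 2 (2*β) ≤ (∑ Q ∈ F', P.S Q w) / (F'.card : ℝ)) :=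
  stmt15_general β hβ P heq
end
end
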